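/- Let S ⊆ E^n with 0̄ ∈ S, a = χ^S, ρ(S) ≤ 1/2, and set t = cor(S). Then the equality nei(S) = ρ(S)·n + (n − 2(t+1))(1 − ρ(S)) holds if and only if B'_i(a) = 0 for every i ≥ t+2. -/

import Mathlib

/-!
Write `â(v) = ∑_{u ∈ S} (-1)^⟨u,v⟩` and `W_k = ∑_{wt v = k} â(v)²`. The MacWilliams identity
gives `B'_k = W_k / |S|²`, Parseval gives `∑ W_k = 2ⁿ |S|`, and since
`2 wt v = ∑ᵢ (1 - (-1)^{vᵢ})`, also `2 ∑ k W_k = 2ⁿ (n |S| - D)`, where `D = |S| nei(S)` counts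
the ordered adjacent pairs of `S`. Moreover `W_0 = |S|²`, and correlation immunity of order `t`
kills `W_k` for `0 < k ≤ t`. Hence
`2 ∑_{k ≥ t+2} (k - t - 1) W_k = 2ⁿ |S| (ρ n + (n - 2(t+1))(1 - ρ) - nei S)`, a sum of
nonnegative terms, which vanishes iff `W_k = 0`, i.e. `B'_k = 0`, for every `k ≥ t + 2`.
-/

open Finset

/-- Weight of a vector in the Boolean cube: the number of ones. -/
def wt {n : ℕ} (y : Fin n → Bool) : ℕ := (Finset.univ.filter fun i => y i = true).card

/-- The face `E^n_y(z) = {x : [x,y] = [z,y]}`: all `x` agreeing with `z` on the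
support of `y`. -/
def face {n : ℕ} (y z : Fin n → Bool) : Finset (Fin n → Bool) :=
  Finset.univ.filter fun x => ∀ i, y i = true → x i = z i

/-- `χ^S` is correlation-immune of order `k`: all faces obtained by fixing `k`
coordinates (i.e. faces `E^n_y(z)` with `wt y = k`) intersect `S` in the same
cardinality. -/
def CorrImmune {n : ℕ} (S : Finset (Fin n → Bool)) (k : ℕ) : Prop :=
  ∀ y₁ z₁ y₂ z₂ : Fin n → Bool, wt y₁ = k → wt y₂ = k →
    (face y₁ z₁ ∩ S).card = (face y₂ z₂ ∩ S).card

/-- `cor S` : the maximum order of correlation immunity of `χ^S`. -/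
noncomputable def cor {n : ℕ} (S : Finset (Fin n → Bool)) : ℕ :=
  sSup {k | k ≤ n ∧ CorrImmune S k}

/-- Density `ρ(S) = |S| / 2^n`. -/
def rho {n : ℕ} (S : Finset (Fin n → Bool)) : ℚ := (S.card : ℚ) / 2 ^ n

/-- `nei S`: the average number of neighbors in `S` of vertices of `S`,
`(1/|S|) ∑_{x∈S} |B(x) ∩ S| - 1`, where `B x` is the Hamming ball of radius 1. -/
def nei {n : ℕ} (S : Finset (Fin n → Bool)) : ℚ :=
  (∑ x ∈ S, ((S.filter fun y => hammingDist x y ≤ 1).card : ℚ)) / (S.card : ℚ) - 1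

/-- Characteristic function of `S`, as a rational-valued function. -/
def chi {n : ℕ} (S : Finset (Fin n → Bool)) (x : Fin n → Bool) : ℚ := if x ∈ S then 1 else 0

/-- Characteristic function of `S` as a 2-coloring (color 1 = membership in `S`). -/
def chiCol {n : ℕ} (S : Finset (Fin n → Bool)) (x : Fin n → Bool) : Fin 2 :=
  if x ∈ S then 1 else 0

/-- `Col` is a perfect coloring with parameter matrix `A`: every vertex of color `i`
has exactly `A i j` neighbors (at Hamming distance 1) of color `j`. -/
def IsPerfectColoring {n : ℕ} (Col : (Fin n → Bool) → Fin 2) (A : Fin 2 → Fin 2 → ℕ) : Prop :=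
  ∀ x : Fin n → Bool, ∀ j : Fin 2,
    (Finset.univ.filter fun y => hammingDist x y = 1 ∧ Col y = j).card = A (Col x) j

/-- Fourier transform `â(v) = ∑_u a(u) (-1)^{⟨u,v⟩}`. -/
def fourierT {n : ℕ} (a : (Fin n → Bool) → ℚ) (v : Fin n → Bool) : ℚ :=
  ∑ u : Fin n → Bool, a u * (-1) ^ ((Finset.univ.filter fun i => u i = true ∧ v i = true).card)

/-- Coordinatewise XOR. -/
def xorv {n : ℕ} (u v : Fin n → Bool) : Fin n → Bool := fun i => xor (u i) (v i)

/-- Weight distribution `B_i(a) = (1/|S|) |{(u,v) ∈ S×S : wt(u⊕v) = i}|`. -/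
def Bdist {n : ℕ} (S : Finset (Fin n → Bool)) (i : ℕ) : ℚ :=
  (((S ×ˢ S).filter fun p => wt (xorv p.1 p.2) = i).card : ℚ) / (S.card : ℚ)

/-- Kravchuk polynomial `P_k(i) = ∑_{j=0}^k (-1)^j C(i,j) C(n-i,k-j)`. -/
def krav (n k i : ℕ) : ℚ :=
  ∑ j ∈ Finset.range (k + 1),
    (-1 : ℚ) ^ j * (Nat.choose i j : ℚ) * (Nat.choose (n - i) (k - j) : ℚ)

/-- MacWilliams transform `B'_k(a) = (1/|S|) ∑_{i=0}^n B_i(a) P_k(i)`. -/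
def Bmw {n : ℕ} (S : Finset (Fin n → Bool)) (k : ℕ) : ℚ :=
  (∑ i ∈ Finset.range (n + 1), Bdist S i * krav n k i) / (S.card : ℚ)

section BooleanCube

variable {n : ℕ}

def supp (v : Fin n → Bool) : Finset (Fin n) := {i | v i = true}

lemma wt_eq_card_supp (v : Fin n → Bool) : wt v = #(supp v) := rfl

lemma supp_decide_mem (T : Finset (Fin n)) : supp (fun i => decide (i ∈ T)) = T := by
  ext; simp [supp]

def unitVec (i : Fin n) : Fin n → Bool := fun j => decide (j = i)

-- `(-1)^⟨x,v⟩` as a product over coordinates, so that sums over the cube factor.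
def walsh (x v : Fin n → Bool) : ℚ :=
  ∏ i, if x i = true ∧ v i = true then -1 else 1

lemma walsh_eq_neg_one_pow (x v : Fin n → Bool) : walsh x v = (-1) ^ #(supp v ∩ supp x) := by
  rw [walsh, prod_ite, prod_const, prod_const, one_pow, mul_one, supp, supp, inter_comm,
    filter_and]

lemma walsh_mul_walsh (u w v : Fin n → Bool) : walsh u v * walsh w v = walsh (xorv u w) v := by
  simp only [walsh, xorv, ← prod_mul_distrib]
  refine prod_congr rfl fun i _ => ?_
  split_ifs <;> simp_all

lemma xorv_eq_zero_iff {u w : Fin n → Bool} : xorv u w = (fun _ => false) ↔ u = w := by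
  simp [funext_iff, xorv]

lemma wt_xorv (u w : Fin n → Bool) : wt (xorv u w) = hammingDist u w := by
  simp [wt, hammingDist, xorv]

lemma wt_le (v : Fin n → Bool) : wt v ≤ n :=
  (card_filter_le _ _).trans_eq (card_fin n)

lemma sum_walsh (x : Fin n → Bool) :
    ∑ v, walsh x v = if x = (fun _ => false) then 2 ^ n else 0 := by
  simp only [walsh]
  rw [← Fintype.prod_sum fun i (b : Bool) => if x i = true ∧ b = true then (-1 : ℚ) else 1]
  split_ifs with hx
  · subst hx
    simp
  · obtain ⟨i, hi⟩ : ∃ i, x i = true := by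
      by_contra! h
      exact hx (funext fun i => by simpa using h i)
    exact prod_eq_zero (mem_univ i) (by simp [hi])

lemma walsh_unitVec (i : Fin n) (v : Fin n → Bool) :
    walsh (unitVec i) v = if v i = true then -1 else 1 := by
  rw [walsh, Fintype.prod_eq_single i fun j hj => by simp [unitVec, hj]]
  simp [unitVec]

lemma two_mul_wt (v : Fin n → Bool) :
    2 * (wt v : ℚ) = ∑ i, (1 - walsh (unitVec i) v) := by
  simp only [wt, natCast_card_filter, mul_sum, walsh_unitVec]
  refine sum_congr rfl fun i _ => ?_
  cases v i <;> norm_num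

lemma sum_ite_eq_unitVec (x : Fin n → Bool) :
    ∑ i, (if x = unitVec i then (1 : ℚ) else 0) = if wt x = 1 then 1 else 0 := by
  split_ifs with hx
  · obtain ⟨a, ha⟩ := card_eq_one.mp hx
    have : x = unitVec a := funext fun j => by
      rw [unitVec, Bool.eq_iff_iff, decide_eq_true_iff]
      simpa using congrArg (j ∈ ·) ha
    subst this
    simp [unitVec, funext_iff]
  · refine sum_eq_zero fun i _ => if_neg ?_
    rintro rfl
    simp [wt, unitVec, filter_eq'] at hx

lemma two_mul_sum_wt_mul_walsh (x : Fin n → Bool) :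
    2 * ∑ v, (wt v : ℚ) * walsh x v =
      2 ^ n * ((if x = (fun _ => false) then (n : ℚ) else 0) - if wt x = 1 then 1 else 0) := by
  calc 2 * ∑ v, (wt v : ℚ) * walsh x v
      = ∑ i, ∑ v, (walsh x v - walsh (xorv x (unitVec i)) v) := by
        rw [mul_sum, sum_comm]
        refine sum_congr rfl fun v _ => ?_
        rw [← mul_assoc, two_mul_wt, sum_mul]
        refine sum_congr rfl fun i _ => ?_
        rw [← walsh_mul_walsh]
        ring
    _ = ∑ i, 2 ^ n * ((if x = (fun _ => false) then (1 : ℚ) else 0) -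
          if x = unitVec i then 1 else 0) := by
        refine sum_congr rfl fun i _ => ?_
        rw [Finset.sum_sub_distrib, sum_walsh, sum_walsh]
        simp only [xorv_eq_zero_iff]
        split_ifs <;> ring
    _ = _ := by
        rw [← mul_sum, sum_sub_distrib, sum_ite_eq_unitVec]
        simp

lemma card_wt_eq_and_card_supp_inter_eq (A : Finset (Fin n)) {j k : ℕ} (hjk : j ≤ k) :
    #{v : Fin n → Bool | wt v = k ∧ #(supp v ∩ A) = j} =
      (#A).choose j * (n - #A).choose (k - j) := by
  have hAc : n - #A = #Aᶜ := by rw [card_compl, Fintype.card_fin]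
  rw [hAc, ← card_powersetCard, ← card_powersetCard, ← card_product]
  have hsplit : ∀ {P Q : Finset (Fin n)}, P ⊆ A → Q ⊆ Aᶜ →
      (P ∪ Q) ∩ A = P ∧ (P ∪ Q) \ A = Q := by
    intro P Q hPA hQA
    have hQA' : Disjoint Q A := (disjoint_compl_right.mono_right hQA).symm
    constructor
    · rw [union_inter_distrib_right, inter_eq_left.mpr hPA,
        disjoint_iff_inter_eq_empty.mp hQA', union_empty]
    · rw [union_sdiff_distrib, sdiff_eq_empty_iff_subset.mpr hPA,
        sdiff_eq_self_of_disjoint hQA', empty_union]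
  refine card_nbij' (fun v => (supp v ∩ A, supp v \ A)) (fun P i => decide (i ∈ P.1 ∪ P.2))
    ?_ ?_ ?_ ?_
  · intro v hv
    rw [mem_coe, mem_filter] at hv
    obtain ⟨-, hk, hj⟩ := hv
    rw [wt_eq_card_supp] at hk
    have := card_inter_add_card_sdiff (supp v) A
    simp only [coe_product, Set.mem_prod, mem_coe, mem_powersetCard, inter_subset_right, true_and]
    refine ⟨hj, fun i hi => ?_, by omega⟩
    simp_all
  · rintro ⟨P, Q⟩ hPQ
    simp only [coe_product, Set.mem_prod, mem_coe, mem_powersetCard] at hPQ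
    obtain ⟨⟨hPA, hP⟩, hQA, hQ⟩ := hPQ
    rw [mem_coe, mem_filter]
    refine ⟨mem_univ _, ?_⟩
    rw [wt_eq_card_supp, supp_decide_mem, (hsplit hPA hQA).1,
      card_union_of_disjoint (disjoint_compl_right.mono hPA hQA)]
    omega
  · intro v _
    funext i
    simp only [supp, mem_union, mem_inter, mem_sdiff, mem_filter, mem_univ, true_and]
    cases v i <;> simp
  · rintro ⟨P, Q⟩ hPQ
    simp only [coe_product, Set.mem_prod, mem_coe, mem_powersetCard] at hPQ
    simp only [supp_decide_mem, hsplit hPQ.1.1 hPQ.2.1]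

lemma sum_walsh_wt_eq_krav (x : Fin n → Bool) (k : ℕ) :
    ∑ v with wt v = k, walsh x v = krav n k (wt x) := by
  rw [krav, ← sum_fiberwise_of_maps_to (g := fun v => #(supp v ∩ supp x)) (t := range (k + 1))]
  · refine sum_congr rfl fun j hj => ?_
    rw [sum_congr rfl fun v hv => by rw [walsh_eq_neg_one_pow, (mem_filter.mp hv).2],
      sum_const, filter_filter,
      card_wt_eq_and_card_supp_inter_eq _ (Nat.lt_succ_iff.mp (mem_range.mp hj)), nsmul_eq_mul]
    push_cast
    rw [wt_eq_card_supp]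
    ring
  · intro v hv
    rw [mem_range, Nat.lt_succ_iff, ← (mem_filter.mp hv).2]
    exact card_le_card inter_subset_left

lemma wt_update_true {y : Fin n → Bool} {i : Fin n} (hi : y i = false) :
    wt (Function.update y i true) = wt y + 1 := by
  have : supp (Function.update y i true) = insert i (supp y) := by
    ext j
    by_cases h : j = i <;> simp [supp, Function.update_apply, h]
  rw [wt_eq_card_supp, wt_eq_card_supp, this, card_insert_of_notMem (by simp [supp, hi])]

lemma face_update_true (y z : Fin n → Bool) {i : Fin n} (hi : y i = false) (b : Bool) :
    face (Function.update y i true) (Function.update z i b) = {x ∈ face y z | x i = b} := by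
  ext x
  simp only [face, mem_filter, mem_univ, true_and, Function.update_apply]
  constructor
  · intro h
    refine ⟨fun j hj => ?_, by simpa using h i⟩
    have hji : j ≠ i := by rintro rfl; simp [hi] at hj
    simpa [hji, hj] using h j
  · rintro ⟨h, rfl⟩ j hj
    by_cases hji : j = i
    · simp [hji]
    · simp only [hji, if_false] at hj ⊢
      exact h j hj

lemma card_face_inter_eq_add (S : Finset (Fin n → Bool)) (y z : Fin n → Bool) {i : Fin n}
    (hi : y i = false) :
    #(face y z ∩ S) = #(face (Function.update y i true) (Function.update z i true) ∩ S) +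
      #(face (Function.update y i true) (Function.update z i false) ∩ S) := by
  simp only [face_update_true y z hi, filter_inter, Bool.eq_false_iff, ne_eq]
  exact (card_filter_add_card_filter_not _).symm

lemma corrImmune_zero (S : Finset (Fin n → Bool)) : CorrImmune S 0 := by
  have : ∀ y z : Fin n → Bool, wt y = 0 → face y z = univ := fun y z hy => by
    rw [wt, card_eq_zero, filter_eq_empty_iff] at hy
    ext x
    simp only [face, mem_filter, mem_univ, true_and, iff_true]
    exact fun i hi => absurd hi (hy (mem_univ i))
  intro y₁ z₁ y₂ z₂ h₁ h₂
  rw [this y₁ z₁ h₁, this y₂ z₂ h₂]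

lemma CorrImmune.of_succ {S : Finset (Fin n → Bool)} {k : ℕ} (hk : k < n)
    (h : CorrImmune S (k + 1)) : CorrImmune S k := by
  have exists_false : ∀ y : Fin n → Bool, wt y = k → ∃ i, y i = false := by
    intro y hy
    by_contra! hc
    have : wt y = n := by simp [wt, hc]
    omega
  intro y₁ z₁ y₂ z₂ h₁ h₂
  obtain ⟨i₁, hi₁⟩ := exists_false y₁ h₁
  obtain ⟨i₂, hi₂⟩ := exists_false y₂ h₂
  have w₁ : wt (Function.update y₁ i₁ true) = k + 1 := by rw [wt_update_true hi₁, h₁]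
  have w₂ : wt (Function.update y₂ i₂ true) = k + 1 := by rw [wt_update_true hi₂, h₂]
  rw [card_face_inter_eq_add S y₁ z₁ hi₁, card_face_inter_eq_add S y₂ z₂ hi₂,
    h _ _ _ (Function.update z₂ i₂ true) w₁ w₂, h _ _ _ (Function.update z₂ i₂ false) w₁ w₂]

lemma corrImmune_of_le_cor {S : Finset (Fin n → Bool)} {k : ℕ} (hk : k ≤ cor S) :
    CorrImmune S k := by
  obtain ⟨hcor, hci⟩ : cor S ∈ {k | k ≤ n ∧ CorrImmune S k} :=
    Nat.sSup_mem ⟨0, Nat.zero_le n, corrImmune_zero S⟩ ⟨n, fun _ hm => hm.1⟩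
  induction hk using Nat.decreasingInduction with
  | self => exact hci
  | of_succ m hm ih => exact ih.of_succ (by omega)

lemma filter_supp_inter_eq_face_inter (S : Finset (Fin n → Bool)) {v : Fin n → Bool}
    {T : Finset (Fin n)} (hT : T ⊆ supp v) :
    {u ∈ S | supp v ∩ supp u = T} = face v (fun i => decide (i ∈ T)) ∩ S := by
  ext u
  simp only [mem_filter, mem_inter, face, mem_univ, true_and, Finset.ext_iff, supp]
  constructor
  · rintro ⟨hu, h⟩
    refine ⟨fun i hi => Bool.eq_iff_iff.mpr ?_, hu⟩
    simpa [hi] using h i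
  · rintro ⟨h, hu⟩
    refine ⟨hu, fun i => ?_⟩
    by_cases hi : v i = true
    · simp [hi, h i hi]
    · have : i ∉ T := fun hiT => hi (by simpa [supp] using hT hiT)
      simp [hi, this]

lemma sum_walsh_eq_zero_of_corrImmune {S : Finset (Fin n → Bool)} {v : Fin n → Bool}
    (hv : v ≠ fun _ => false) (hS : CorrImmune S (wt v)) : ∑ u ∈ S, walsh u v = 0 := by
  obtain ⟨i, hi⟩ : ∃ i, v i = true := by
    by_contra! h
    exact hv (funext fun i => by simpa using h i)
  have hsupp : (supp v).Nonempty := ⟨i, by simp [supp, hi]⟩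
  have halt := congrArg (Int.cast : ℤ → ℚ) (sum_powerset_neg_one_pow_card_of_nonempty hsupp)
  push_cast at halt
  calc ∑ u ∈ S, walsh u v
      = ∑ T ∈ (supp v).powerset, ∑ u ∈ S with supp v ∩ supp u = T, walsh u v :=
        (sum_fiberwise_of_maps_to (fun u _ => mem_powerset.mpr inter_subset_left) _).symm
    _ = ∑ T ∈ (supp v).powerset, (-1) ^ #T * (#(face v (fun _ => false) ∩ S) : ℚ) := by
        refine sum_congr rfl fun T hT => ?_
        rw [sum_congr rfl fun u hu => by
            rw [walsh_eq_neg_one_pow, (mem_filter.mp hu).2],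
          sum_const, filter_supp_inter_eq_face_inter S (mem_powerset.mp hT),
          hS _ _ v _ rfl rfl, nsmul_eq_mul, mul_comm]
    _ = 0 := by rw [← sum_mul, halt, zero_mul]

def fourierWeight (S : Finset (Fin n → Bool)) (k : ℕ) : ℚ :=
  ∑ v with wt v = k, (∑ u ∈ S, walsh u v) ^ 2

section FourierWeight

variable (S : Finset (Fin n → Bool))

lemma sq_sum_walsh (v : Fin n → Bool) :
    (∑ u ∈ S, walsh u v) ^ 2 = ∑ p ∈ S ×ˢ S, walsh (xorv p.1 p.2) v := by
  simp only [sq, sum_mul_sum, sum_product, walsh_mul_walsh]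

lemma fourierWeight_nonneg (k : ℕ) : 0 ≤ fourierWeight S k :=
  sum_nonneg fun _ _ => sq_nonneg _

lemma fourierWeight_zero : fourierWeight S 0 = #S ^ 2 := by
  have : ({v | wt v = 0} : Finset (Fin n → Bool)) = {fun _ => false} := by
    ext v
    simp [wt, filter_eq_empty_iff, funext_iff]
  rw [fourierWeight, this, sum_singleton]
  simp [walsh]

lemma fourierWeight_eq_zero_of_lt {k : ℕ} (hk : n < k) : fourierWeight S k = 0 := by
  refine sum_eq_zero fun v hv => ?_
  have := wt_le v
  rw [(mem_filter.mp hv).2] at this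
  omega

lemma fourierWeight_eq_zero_of_corrImmune {k : ℕ} (hk : 0 < k) (h : CorrImmune S k) :
    fourierWeight S k = 0 := by
  refine sum_eq_zero fun v hv => ?_
  have hwt : wt v = k := (mem_filter.mp hv).2
  have hv0 : v ≠ fun _ => false := by
    rintro rfl
    simp [wt] at hwt
    omega
  rw [sum_walsh_eq_zero_of_corrImmune hv0 (hwt ▸ h), sq, mul_zero]

lemma sum_mul_fourierWeight (f : ℕ → ℚ) :
    ∑ k ∈ range (n + 1), f k * fourierWeight S k =
      ∑ p ∈ S ×ˢ S, ∑ v, f (wt v) * walsh (xorv p.1 p.2) v := by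
  calc ∑ k ∈ range (n + 1), f k * fourierWeight S k
      = ∑ k ∈ range (n + 1), ∑ v with wt v = k, f (wt v) * (∑ u ∈ S, walsh u v) ^ 2 := by
        refine sum_congr rfl fun k _ => ?_
        rw [fourierWeight, mul_sum]
        exact sum_congr rfl fun v hv => by rw [(mem_filter.mp hv).2]
    _ = ∑ v, f (wt v) * (∑ u ∈ S, walsh u v) ^ 2 :=
        sum_fiberwise_of_maps_to (fun v _ => mem_range.mpr (Nat.lt_succ_of_le (wt_le v))) _
    _ = _ := by
        simp only [sq_sum_walsh, mul_sum]
        exact sum_comm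

lemma sum_ite_xorv_eq_zero (c : ℚ) :
    ∑ p ∈ S ×ˢ S, (if xorv p.1 p.2 = (fun _ => false) then c else 0) = #S * c := by
  simp [sum_product, xorv_eq_zero_iff]

lemma sum_fourierWeight : ∑ k ∈ range (n + 1), fourierWeight S k = 2 ^ n * #S := by
  simpa [sum_walsh, sum_ite_xorv_eq_zero, mul_comm] using sum_mul_fourierWeight S 1

lemma two_mul_sum_mul_fourierWeight :
    2 * ∑ k ∈ range (n + 1), (k : ℚ) * fourierWeight S k =
      2 ^ n * (n * #S - #{p ∈ S ×ˢ S | hammingDist p.1 p.2 = 1}) := by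
  rw [sum_mul_fourierWeight, mul_sum]
  simp only [two_mul_sum_wt_mul_walsh, ← mul_sum, sum_sub_distrib, sum_ite_xorv_eq_zero,
    sum_boole, wt_xorv]
  ring

lemma Bmw_eq_fourierWeight_div (k : ℕ) : Bmw S k = fourierWeight S k / #S ^ 2 := by
  have hW : fourierWeight S k = ∑ p ∈ S ×ˢ S, krav n k (wt (xorv p.1 p.2)) := by
    rw [fourierWeight]
    simp only [sq_sum_walsh]
    rw [sum_comm]
    exact sum_congr rfl fun p _ => sum_walsh_wt_eq_krav _ k
  rw [hW, ← sum_fiberwise_of_maps_to (g := fun p => wt (xorv p.1 p.2)) (t := range (n + 1))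
    fun p _ => mem_range.mpr (Nat.lt_succ_of_le (wt_le _)), Bmw, sum_div, sum_div, sq]
  refine sum_congr rfl fun i _ => ?_
  rw [sum_congr rfl fun p hp => by rw [(mem_filter.mp hp).2], sum_const, nsmul_eq_mul, Bdist]
  ring

end FourierWeight

lemma nei_eq_card_div {S : Finset (Fin n → Bool)} (hS : S.Nonempty) :
    nei S = #{p ∈ S ×ˢ S | hammingDist p.1 p.2 = 1} / #S := by
  have hball : ∀ x ∈ S,
      {y ∈ S | hammingDist x y ≤ 1} = insert x {y ∈ S | hammingDist x y = 1} := fun x hx => by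
    ext y
    simp only [mem_filter, mem_insert, Nat.le_one_iff_eq_zero_or_eq_one, hammingDist_eq_zero]
    grind
  have hcard : ∑ x ∈ S, (#{y ∈ S | hammingDist x y ≤ 1} : ℚ) =
      #S + #{p ∈ S ×ˢ S | hammingDist p.1 p.2 = 1} := by
    rw [sum_congr rfl fun x hx => by
        rw [hball x hx, card_insert_of_notMem (by simp), Nat.cast_add_one],
      sum_add_distrib, sum_const, nsmul_one, add_comm, ← Nat.cast_sum, card_filter, sum_product]
    simp only [card_filter]
  rw [nei, hcard]
  have : (#S : ℚ) ≠ 0 := by exact_mod_cast hS.card_pos.ne'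
  field_simp
  ring

lemma two_mul_sum_excess_fourierWeight {S : Finset (Fin n → Bool)} (hS : S.Nonempty) {t : ℕ}
    (ht : t ≤ cor S) :
    2 * ∑ k ∈ range (n + 1) with t + 2 ≤ k, ((k : ℚ) - (t + 1)) * fourierWeight S k =
      2 ^ n * #S * (rho S * n + (n - 2 * (t + 1)) * (1 - rho S) - nei S) := by
  have hlow : ∑ k ∈ range (n + 1) with ¬ t + 2 ≤ k, ((k : ℚ) - (t + 1)) * fourierWeight S k =
      -(t + 1) * #S ^ 2 := by
    rw [sum_eq_single_of_mem 0 (by simp) fun k hk hk0 => ?_]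
    · simp [fourierWeight_zero]
    obtain ⟨-, hkt⟩ := mem_filter.mp hk
    rcases eq_or_ne k (t + 1) with rfl | hkt'
    · simp
    · rw [fourierWeight_eq_zero_of_corrImmune S (Nat.pos_of_ne_zero hk0)
        (corrImmune_of_le_cor (by omega)), mul_zero]
  have htotal : ∑ k ∈ range (n + 1), ((k : ℚ) - (t + 1)) * fourierWeight S k =
      ∑ k ∈ range (n + 1), (k : ℚ) * fourierWeight S k - (t + 1) * (2 ^ n * #S) := by
    rw [← sum_fourierWeight S, mul_sum, ← sum_sub_distrib]
    exact sum_congr rfl fun k _ => by ring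
  have hsplit := sum_filter_add_sum_filter_not (range (n + 1)) (t + 2 ≤ ·)
    fun k => ((k : ℚ) - (t + 1)) * fourierWeight S k
  have hs : (#S : ℚ) ≠ 0 := by exact_mod_cast hS.card_pos.ne'
  have hrho : 2 ^ n * #S * rho S = #S ^ 2 := by
    rw [rho]
    field_simp
  have hnei : #S * nei S = #{p ∈ S ×ˢ S | hammingDist p.1 p.2 = 1} := by
    rw [nei_eq_card_div hS]
    field_simp
  linear_combination 2 * hsplit - 2 * hlow + 2 * htotal + two_mul_sum_mul_fourierWeight S
    - 2 * (t + 1) * hrho + 2 ^ n * hnei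

theorem nei_eq_iff_Bmw_eq_zero {S : Finset (Fin n → Bool)} (hS : S.Nonempty) {t : ℕ}
    (ht : t ≤ cor S) :
    nei S = rho S * n + (n - 2 * (t + 1)) * (1 - rho S) ↔ ∀ i, t + 2 ≤ i → Bmw S i = 0 := by
  have hs : (#S : ℚ) ≠ 0 := by exact_mod_cast hS.card_pos.ne'
  have hcoeff : ∀ k : ℕ, t + 2 ≤ k → 0 < (k : ℚ) - (t + 1) := fun k hk => by
    have : (t : ℚ) + 2 ≤ k := by exact_mod_cast hk
    linarith
  calc nei S = rho S * n + (n - 2 * (t + 1)) * (1 - rho S)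
      ↔ ∑ k ∈ range (n + 1) with t + 2 ≤ k, ((k : ℚ) - (t + 1)) * fourierWeight S k = 0 := by
        rw [eq_comm, ← sub_eq_zero,
          ← mul_right_inj' (by positivity : (2 : ℚ) * (2 ^ n * #S) ≠ 0), mul_zero, mul_assoc,
          ← two_mul_sum_excess_fourierWeight hS ht, mul_eq_zero]
        simp
    _ ↔ ∀ k ∈ {k ∈ range (n + 1) | t + 2 ≤ k}, ((k : ℚ) - (t + 1)) * fourierWeight S k = 0 :=
        sum_eq_zero_iff_of_nonneg fun k hk =>
          mul_nonneg (hcoeff k (mem_filter.mp hk).2).le (fourierWeight_nonneg S k)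
    _ ↔ ∀ i, t + 2 ≤ i → fourierWeight S i = 0 := by
        refine ⟨fun h i hi => ?_, fun h k hk => by rw [h k (mem_filter.mp hk).2, mul_zero]⟩
        rcases le_or_gt i n with hin | hin
        · have hi' : i ∈ {k ∈ range (n + 1) | t + 2 ≤ k} :=
            mem_filter.mpr ⟨mem_range.mpr (by omega), hi⟩
          exact (mul_eq_zero.mp (h i hi')).resolve_left (hcoeff i hi).ne'
        · exact fourierWeight_eq_zero_of_lt S hin
    _ ↔ ∀ i, t + 2 ≤ i → Bmw S i = 0 := by
        simp [Bmw_eq_fourierWeight_div, hs]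

end BooleanCube

theorem stmt16_general {n : ℕ} (S : Finset (Fin n → Bool)) (h0 : (fun _ => false) ∈ S)
    (t : ℕ) (ht : t = cor S) :
    nei S = rho S * (n : ℚ) + ((n : ℚ) - 2 * ((t : ℚ) + 1)) * (1 - rho S) ↔
      ∀ i : ℕ, t + 2 ≤ i → Bmw S i = 0 :=
  nei_eq_iff_Bmw_eq_zero ⟨_, h0⟩ ht.le

/-- For `0̄ ∈ S`, `ρ(S) ≤ 1/2` and `t = cor S`:
`nei S = ρ(S)·n + (n - 2(t+1))(1 - ρ(S))` iff `B'_i(a) = 0` for every `i ≥ t + 2`. -/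
theorem stmt16 {n : ℕ} (S : Finset (Fin n → Bool)) (h0 : (fun _ => false) ∈ S)
    (hρ : rho S ≤ 1 / 2) (t : ℕ) (ht : t = cor S) :
    nei S = rho S * (n : ℚ) + ((n : ℚ) - 2 * ((t : ℚ) + 1)) * (1 - rho S) ↔
      ∀ i : ℕ, t + 2 ≤ i → Bmw S i = 0 :=
  stmt16_general S h0 t ht
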